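/- (Type C_n, principal element.) Let n ≥ 2 and let ρ = n e₁ + (n−1) e₂ + ⋯ + 2 e_{n−1} + e_n ∈ ℝ^n. Then the minimum over k ∈ {1, …, n} of ℓ_ρ⁻(ϖ_k) equals n and is attained at k = 1. Moreover, the only linear map of ℝ^n expressible as a composition of at most n simple reflections of type C_n and satisfying ⟨w ϖ₁, ρ⟩ < 0 is w = s_n ∘ s_{n−1} ∘ ⋯ ∘ s₁ (with s₁ applied first), which sends e₁ to −e_n. -/

import Mathlib

open scoped RealInnerProductSpace

/-- The `j`-th simple reflection of type `Cₙ` (`1 ≤ j ≤ n`), acting on `ℝⁿ`: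
for `j < n` it transposes the coordinates numbered `j` and `j+1` (in `1`-based numbering),
and for `j = n` it negates the last coordinate. -/
noncomputable def sC (n j : ℕ) : EuclideanSpace ℝ (Fin n) → EuclideanSpace ℝ (Fin n) :=
  fun v => WithLp.toLp 2 fun i =>
    if j = n then (if (i : ℕ) + 1 = n then -(v i) else v i)
    else if (i : ℕ) + 1 = j then v ⟨j % n, Nat.mod_lt _ i.pos⟩
    else if (i : ℕ) = j then v ⟨(j - 1) % n, Nat.mod_lt _ i.pos⟩
    else v i

/-- The composition of the simple reflections indexed by the entries of `l`
(the last entry of the list is applied first). -/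
noncomputable def compC (n : ℕ) (l : List ℕ) :
    EuclideanSpace ℝ (Fin n) → EuclideanSpace ℝ (Fin n) :=
  l.foldr (fun j g => sC n j ∘ g) id

/-- The fundamental weight `ϖⱼ = e₁ + ⋯ + eⱼ` of type `Cₙ` (`1 ≤ j ≤ n`). -/
noncomputable def wtC (n j : ℕ) : EuclideanSpace ℝ (Fin n) :=
  WithLp.toLp 2 fun i => if (i : ℕ) < j then 1 else 0

/-- `ρ = n·e₁ + (n−1)·e₂ + ⋯ + 2·e_{n−1} + eₙ` of type `Cₙ`. -/
noncomputable def rhoC (n : ℕ) : EuclideanSpace ℝ (Fin n) :=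
  WithLp.toLp 2 fun i => (n : ℝ) - (i : ℕ)

/-- The vector `−eₙ`. -/
noncomputable def negEnC (n : ℕ) : EuclideanSpace ℝ (Fin n) :=
  WithLp.toLp 2 fun i => if (i : ℕ) + 1 = n then -1 else 0


/-!
A simple reflection changes `⟪v, ρ⟫` by `v_{j+1} - v_j` (for `j < n`) or by `-2 v_n`, and it only
permutes and negates coordinates; so along any word applied to a vector with coordinates in
`[-1, 1]` the pairing drops by at most `2` per letter. As `⟪ϖ_k, ρ⟫ ≥ 2n - 1` for `k ≥ 2`, a
negative pairing needs at least `n` letters.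

For `ϖ₁ = e₁` this bound is too weak, and we follow the orbit `{±e_i}` instead, listed as
`e₁, …, eₙ, -eₙ, …, -e₁` (index `t = 0, …, 2n - 1`). The pairing with `ρ` is negative exactly
from `t = n` on, and a reflection raises `t` by at most one, and by exactly one only if it is
`s_{t+1}`. So `n` letters are needed, and the only word of length `n` that works is `sₙ ⋯ s₁`.
-/

lemma sC_eq_of_lt {n j : ℕ} (hj1 : 1 ≤ j) (hjn : j < n) (v : EuclideanSpace ℝ (Fin n)) :
    sC n j v = v + (v ⟨j, hjn⟩ - v ⟨j - 1, by omega⟩) •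
      (EuclideanSpace.single ⟨j - 1, by omega⟩ 1 - EuclideanSpace.single ⟨j, hjn⟩ 1) := by
  ext i
  simp only [sC, if_neg hjn.ne, Nat.mod_eq_of_lt hjn, Nat.mod_eq_of_lt (by omega : j - 1 < n),
    PiLp.single_apply, PiLp.toLp_apply, PiLp.add_apply, PiLp.smul_apply, PiLp.sub_apply,
    smul_eq_mul]
  rcases eq_or_ne i ⟨j - 1, by omega⟩ with rfl | ha
  · simp only [Nat.sub_add_cancel hj1, if_true, Fin.mk.injEq, if_neg (by omega : j - 1 ≠ j)]
    ring
  rcases eq_or_ne i ⟨j, hjn⟩ with rfl | hb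
  · simp only [if_neg (by omega : j + 1 ≠ j), if_true, Fin.mk.injEq, if_neg (by omega : j ≠ j - 1)]
    ring
  · have ha' : (i : ℕ) + 1 ≠ j := fun h => ha (Fin.ext (by simp only; omega))
    have hb' : (i : ℕ) ≠ j := fun h => hb (Fin.ext h)
    simp [ha, hb, ha', hb']

lemma sC_self_eq {n : ℕ} (hn : 1 ≤ n) (v : EuclideanSpace ℝ (Fin n)) :
    sC n n v = v - (2 * v ⟨n - 1, by omega⟩) • EuclideanSpace.single ⟨n - 1, by omega⟩ 1 := by
  ext i
  simp only [sC, PiLp.single_apply, PiLp.toLp_apply, PiLp.sub_apply, PiLp.smul_apply,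
    smul_eq_mul, if_true]
  rcases eq_or_ne i ⟨n - 1, by omega⟩ with rfl | ha
  · simp only [Nat.sub_add_cancel hn, if_true]
    ring
  · have ha' : (i : ℕ) + 1 ≠ n := fun h => ha (Fin.ext (by simp only; omega))
    simp [ha, ha']

lemma inner_rhoC (n : ℕ) (v : EuclideanSpace ℝ (Fin n)) :
    ⟪v, rhoC n⟫ = ∑ i, v i * ((n : ℝ) - (i : ℕ)) := by
  simp [PiLp.inner_apply, rhoC, mul_comm]

lemma rhoC_apply_pos {n : ℕ} (i : Fin n) : 0 < rhoC n i := by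
  simp only [rhoC, PiLp.toLp_apply, sub_pos, Nat.cast_lt, i.isLt]

lemma inner_sC_rhoC_of_lt {n j : ℕ} (hj1 : 1 ≤ j) (hjn : j < n) (v : EuclideanSpace ℝ (Fin n)) :
    ⟪sC n j v, rhoC n⟫ = ⟪v, rhoC n⟫ + (v ⟨j, hjn⟩ - v ⟨j - 1, by omega⟩) := by
  rw [sC_eq_of_lt hj1 hjn, inner_add_left, real_inner_smul_left, inner_sub_left,
    EuclideanSpace.inner_single_left, EuclideanSpace.inner_single_left]
  simp [rhoC, Nat.cast_sub hj1]

lemma inner_sC_self_rhoC {n : ℕ} (hn : 1 ≤ n) (v : EuclideanSpace ℝ (Fin n)) :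
    ⟪sC n n v, rhoC n⟫ = ⟪v, rhoC n⟫ - 2 * v ⟨n - 1, by omega⟩ := by
  rw [sC_self_eq hn, inner_sub_left, real_inner_smul_left, EuclideanSpace.inner_single_left]
  simp [rhoC, Nat.cast_sub hn]

lemma abs_sC_apply_le {n : ℕ} (j : ℕ) {v : EuclideanSpace ℝ (Fin n)} {c : ℝ}
    (hv : ∀ i, |v i| ≤ c) (i : Fin n) : |sC n j v i| ≤ c := by
  simp only [sC, PiLp.toLp_apply]
  split_ifs <;> simp only [abs_neg, hv]

lemma abs_compC_apply_le {n : ℕ} (l : List ℕ) {v : EuclideanSpace ℝ (Fin n)} {c : ℝ}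
    (hv : ∀ i, |v i| ≤ c) (i : Fin n) : |compC n l v i| ≤ c := by
  induction l generalizing i with
  | nil => exact hv i
  | cons j l ih => exact abs_sC_apply_le j ih i

lemma inner_sC_rhoC_ge {n j : ℕ} (hj1 : 1 ≤ j) (hjn : j ≤ n) {v : EuclideanSpace ℝ (Fin n)}
    {c : ℝ} (hv : ∀ i, |v i| ≤ c) : ⟪v, rhoC n⟫ - 2 * c ≤ ⟪sC n j v, rhoC n⟫ := by
  rcases hjn.lt_or_eq with hjn | rfl
  · rw [inner_sC_rhoC_of_lt hj1 hjn]
    linarith [abs_le.1 (hv ⟨j, hjn⟩), abs_le.1 (hv ⟨j - 1, by omega⟩)]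
  · rw [inner_sC_self_rhoC hj1]
    linarith [abs_le.1 (hv ⟨j - 1, by omega⟩)]

lemma inner_compC_rhoC_ge {n : ℕ} {l : List ℕ} (hl : ∀ m ∈ l, 1 ≤ m ∧ m ≤ n)
    {v : EuclideanSpace ℝ (Fin n)} {c : ℝ} (hv : ∀ i, |v i| ≤ c) :
    ⟪v, rhoC n⟫ - 2 * c * l.length ≤ ⟪compC n l v, rhoC n⟫ := by
  induction l with
  | nil => simp [compC]
  | cons j l ih =>
    obtain ⟨hj1, hjn⟩ := hl j List.mem_cons_self
    have hstep := inner_sC_rhoC_ge hj1 hjn (abs_compC_apply_le l hv)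
    have hrest := ih fun m hm => hl m (List.mem_cons_of_mem j hm)
    rw [List.length_cons, Nat.cast_succ]
    change _ ≤ ⟪sC n j (compC n l v), rhoC n⟫
    linarith

lemma abs_wtC_apply_le (n k : ℕ) (i : Fin n) : |wtC n k i| ≤ 1 := by
  simp only [wtC, PiLp.toLp_apply]
  split_ifs <;> norm_num

lemma two_mul_sub_one_le_inner_wtC_rhoC {n k : ℕ} (hn : 2 ≤ n) (hk : 2 ≤ k) :
    2 * (n : ℝ) - 1 ≤ ⟪wtC n k, rhoC n⟫ := by
  have hterm (i : Fin n) : 0 ≤ wtC n k i * ((n : ℝ) - (i : ℕ)) := by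
    have hi : ((i : ℕ) : ℝ) < n := by exact_mod_cast i.isLt
    simp only [wtC, PiLp.toLp_apply]
    split_ifs <;> nlinarith
  let i₀ : Fin n := ⟨0, by omega⟩
  let i₁ : Fin n := ⟨1, by omega⟩
  calc 2 * (n : ℝ) - 1 = ∑ i ∈ {i₀, i₁}, wtC n k i * ((n : ℝ) - (i : ℕ)) := by
        rw [Finset.sum_pair (by simp [i₀, i₁, Fin.ext_iff])]
        simp only [wtC, PiLp.toLp_apply, i₀, i₁, if_pos (by omega : 0 < k),
          if_pos (by omega : 1 < k), Nat.cast_zero, Nat.cast_one]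
        ring
    _ ≤ ⟪wtC n k, rhoC n⟫ := by
        rw [inner_rhoC]
        exact Finset.sum_le_sum_of_subset_of_nonneg (Finset.subset_univ _) fun i _ _ => hterm i

lemma n_le_length_of_two_le_of_inner_wtC_rhoC_neg {n k : ℕ} (hn : 2 ≤ n) (hk : 2 ≤ k)
    {l : List ℕ} (hl : ∀ m ∈ l, 1 ≤ m ∧ m ≤ n) (hneg : ⟪compC n l (wtC n k), rhoC n⟫ < 0) :
    n ≤ l.length := by
  by_contra! hlt
  have hlt' : (l.length : ℝ) + 1 ≤ n := by exact_mod_cast hlt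
  linarith [inner_compC_rhoC_ge hl (abs_wtC_apply_le n k), two_mul_sub_one_le_inner_wtC_rhoC hn hk]

noncomputable def orbitVec (n t : ℕ) : EuclideanSpace ℝ (Fin n) :=
  WithLp.toLp 2 fun i => if (i : ℕ) = t then 1 else if (i : ℕ) + t = 2 * n - 1 then -1 else 0

def orbitStep (n j t : ℕ) : ℕ :=
  if j = n then (if t = n - 1 then n else if t = n then n - 1 else t)
  else if t + 1 = j then j
  else if t = j then j - 1
  else if t + j = 2 * n - 1 then 2 * n - j
  else if t + j = 2 * n then t - 1
  else t

def orbitIndex (n : ℕ) (l : List ℕ) : ℕ := l.foldr (orbitStep n) 0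

lemma orbitIndex_cons (n j : ℕ) (l : List ℕ) :
    orbitIndex n (j :: l) = orbitStep n j (orbitIndex n l) := rfl

lemma orbitStep_le_succ (n j t : ℕ) : orbitStep n j t ≤ t + 1 := by
  unfold orbitStep; split_ifs <;> omega

lemma orbitStep_lt {n j t : ℕ} (hj1 : 1 ≤ j) (hjn : j ≤ n) (ht : t < 2 * n) :
    orbitStep n j t < 2 * n := by
  unfold orbitStep; split_ifs <;> omega

lemma eq_of_orbitStep_eq_succ {n j t : ℕ} (hjn : j ≤ n) (ht : t < n)
    (h : orbitStep n j t = t + 1) : j = t + 1 := by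
  unfold orbitStep at h; split_ifs at h <;> omega

lemma sC_orbitVec {n j t : ℕ} (hj1 : 1 ≤ j) (hjn : j ≤ n) (ht : t < 2 * n) :
    sC n j (orbitVec n t) = orbitVec n (orbitStep n j t) := by
  ext i
  have hi := i.isLt
  rcases hjn.lt_or_eq with hjn | rfl
  · simp only [sC, orbitVec, orbitStep, hjn.ne, Nat.mod_eq_of_lt hjn,
      Nat.mod_eq_of_lt (by omega : j - 1 < n), PiLp.toLp_apply, if_false]
    split_ifs <;> first | rfl | omega
  · simp only [sC, orbitVec, orbitStep, PiLp.toLp_apply, if_true]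
    split_ifs <;> first | rfl | omega | norm_num

lemma orbitVec_zero (n : ℕ) : orbitVec n 0 = wtC n 1 := by
  ext i
  have hi := i.isLt
  simp only [orbitVec, wtC, PiLp.toLp_apply]
  split_ifs <;> first | rfl | omega

lemma orbitVec_self (n : ℕ) : orbitVec n n = negEnC n := by
  ext i
  have hi := i.isLt
  simp only [orbitVec, negEnC, PiLp.toLp_apply]
  split_ifs <;> first | rfl | omega

lemma orbitVec_of_lt {n t : ℕ} (ht : t < n) :
    orbitVec n t = EuclideanSpace.single ⟨t, ht⟩ 1 := by
  ext i
  simp only [orbitVec, PiLp.toLp_apply, PiLp.single_apply, Fin.ext_iff]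
  split_ifs <;> first | rfl | omega

lemma orbitVec_of_le {n t : ℕ} (ht : n ≤ t) (ht' : t < 2 * n) :
    orbitVec n t = EuclideanSpace.single ⟨2 * n - 1 - t, by omega⟩ (-1) := by
  ext i
  simp only [orbitVec, PiLp.toLp_apply, PiLp.single_apply, Fin.ext_iff]
  split_ifs <;> first | rfl | omega

lemma inner_orbitVec_rhoC_neg_iff {n t : ℕ} (ht : t < 2 * n) :
    ⟪orbitVec n t, rhoC n⟫ < 0 ↔ n ≤ t := by
  rcases lt_or_ge t n with htn | htn
  · rw [orbitVec_of_lt htn, EuclideanSpace.inner_single_left]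
    simp only [map_one, one_mul]
    exact iff_of_false (rhoC_apply_pos _).not_gt htn.not_ge
  · rw [orbitVec_of_le htn ht, EuclideanSpace.inner_single_left]
    simp only [map_neg, map_one, neg_mul, one_mul, neg_lt_zero]
    exact iff_of_true (rhoC_apply_pos _) htn

lemma orbitIndex_le_length (n : ℕ) (l : List ℕ) : orbitIndex n l ≤ l.length := by
  induction l with
  | nil => rfl
  | cons j l ih => exact (orbitStep_le_succ n j _).trans (Nat.succ_le_succ ih)

lemma orbitIndex_lt {n : ℕ} (hn : 0 < n) {l : List ℕ} (hl : ∀ m ∈ l, 1 ≤ m ∧ m ≤ n) :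
    orbitIndex n l < 2 * n := by
  induction l with
  | nil => exact Nat.mul_pos two_pos hn
  | cons j l ih =>
    obtain ⟨hj1, hjn⟩ := hl j List.mem_cons_self
    exact orbitStep_lt hj1 hjn (ih fun m hm => hl m (List.mem_cons_of_mem j hm))

lemma compC_wtC_one {n : ℕ} {l : List ℕ} (hl : ∀ m ∈ l, 1 ≤ m ∧ m ≤ n) :
    compC n l (wtC n 1) = orbitVec n (orbitIndex n l) := by
  induction l with
  | nil => exact (orbitVec_zero n).symm
  | cons j l ih =>
    obtain ⟨hj1, hjn⟩ := hl j List.mem_cons_self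
    have hl' : ∀ m ∈ l, 1 ≤ m ∧ m ≤ n := fun m hm => hl m (List.mem_cons_of_mem j hm)
    change sC n j (compC n l (wtC n 1)) = _
    rw [ih hl', sC_orbitVec hj1 hjn (orbitIndex_lt (by omega) hl'), orbitIndex_cons]

lemma n_le_orbitIndex_of_inner_neg {n : ℕ} (hn : 0 < n) {l : List ℕ}
    (hl : ∀ m ∈ l, 1 ≤ m ∧ m ≤ n) (hneg : ⟪compC n l (wtC n 1), rhoC n⟫ < 0) :
    n ≤ orbitIndex n l := by
  rwa [compC_wtC_one hl, inner_orbitVec_rhoC_neg_iff (orbitIndex_lt hn hl)] at hneg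

lemma map_sub_range_succ (m : ℕ) :
    (List.range (m + 1)).map (fun i => m + 1 - i) =
      (m + 1) :: (List.range m).map (fun i => m - i) := by
  simp [List.range_succ_eq_map, Function.comp_def]

lemma orbitIndex_map_sub_range {n m : ℕ} (hm : m ≤ n) :
    orbitIndex n ((List.range m).map (fun i => m - i)) = m := by
  induction m with
  | zero => rfl
  | succ m ih =>
    rw [map_sub_range_succ, orbitIndex_cons, ih (by omega)]
    unfold orbitStep
    split_ifs <;> omega

lemma eq_map_sub_range_of_orbitIndex_eq_length {n : ℕ} {l : List ℕ}
    (hl : ∀ m ∈ l, 1 ≤ m ∧ m ≤ n) (hlen : l.length ≤ n) (h : orbitIndex n l = l.length) :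
    l = (List.range l.length).map (fun i => l.length - i) := by
  induction l with
  | nil => rfl
  | cons j l ih =>
    obtain ⟨-, hjn⟩ := hl j List.mem_cons_self
    have hl' : ∀ m ∈ l, 1 ≤ m ∧ m ≤ n := fun m hm => hl m (List.mem_cons_of_mem j hm)
    rw [List.length_cons] at hlen h
    rw [orbitIndex_cons] at h
    have ht : orbitIndex n l = l.length := by
      have := orbitStep_le_succ n j (orbitIndex n l)
      have := orbitIndex_le_length n l
      omega
    have hj : j = l.length + 1 := by
      rw [← ht]
      exact eq_of_orbitStep_eq_succ hjn (by omega) (by rw [h, ht])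
    rw [List.length_cons, map_sub_range_succ, ← hj, ← ih hl' (by omega) ht]

lemma n_le_length_of_inner_wtC_rhoC_neg {n k : ℕ} (hn : 2 ≤ n) (hk : 1 ≤ k) {l : List ℕ}
    (hl : ∀ m ∈ l, 1 ≤ m ∧ m ≤ n) (hneg : ⟪compC n l (wtC n k), rhoC n⟫ < 0) :
    n ≤ l.length := by
  rcases hk.eq_or_lt with rfl | hk
  · exact (n_le_orbitIndex_of_inner_neg (by omega) hl hneg).trans (orbitIndex_le_length n l)
  · exact n_le_length_of_two_le_of_inner_wtC_rhoC_neg hn hk hl hneg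

theorem statement11 (n : ℕ) (hn : 2 ≤ n) :
    IsLeast {k : ℕ | ∃ l : List ℕ, (∀ m ∈ l, 1 ≤ m ∧ m ≤ n) ∧ l.length = k ∧
        ⟪compC n l (wtC n 1), rhoC n⟫ < 0} n ∧
    (∀ k, 1 ≤ k → k ≤ n → ∀ l : List ℕ, (∀ m ∈ l, 1 ≤ m ∧ m ≤ n) →
        ⟪compC n l (wtC n k), rhoC n⟫ < 0 → n ≤ l.length) ∧
    (∀ l : List ℕ, (∀ m ∈ l, 1 ≤ m ∧ m ≤ n) → l.length ≤ n →
        ⟪compC n l (wtC n 1), rhoC n⟫ < 0 →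
        compC n l = compC n ((List.range n).map (fun i => n - i))) ∧
    compC n ((List.range n).map (fun i => n - i)) (wtC n 1) = negEnC n := by
  have hdesc : ∀ m ∈ (List.range n).map (fun i => n - i), 1 ≤ m ∧ m ≤ n := by
    simp only [List.mem_map, List.mem_range]
    omega
  have hdesc_val : compC n ((List.range n).map (fun i => n - i)) (wtC n 1) = negEnC n := by
    rw [compC_wtC_one hdesc, orbitIndex_map_sub_range le_rfl, orbitVec_self]
  refine ⟨⟨⟨_, hdesc, by simp, ?_⟩, ?_⟩,
    fun k hk _ l hl => n_le_length_of_inner_wtC_rhoC_neg hn hk hl, ?_, hdesc_val⟩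
  · rw [hdesc_val, ← orbitVec_self, inner_orbitVec_rhoC_neg_iff (by omega)]
  · rintro k ⟨l, hl, rfl, hneg⟩
    exact n_le_length_of_inner_wtC_rhoC_neg hn le_rfl hl hneg
  · intro l hl hlen hneg
    have hindex := n_le_orbitIndex_of_inner_neg (by omega) hl hneg
    have hl_eq := eq_map_sub_range_of_orbitIndex_eq_length hl hlen
      (le_antisymm (orbitIndex_le_length n l) (by omega))
    rw [hl_eq, le_antisymm hlen (hindex.trans (orbitIndex_le_length n l))]
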